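/- (Extended superstability, pointwise.) Let A ∈ ℝ^{n×n}, B ∈ ℝ^{n×m}, and suppose there exist v ∈ ℝ^n with v_i > 0 for all i, M ∈ ℝ^{n×n}, and S ∈ ℝ^{m×n} such that for every i, Σ_{j=1}^n M_{ij} < v_i, and for every i, j, |A_{ij} v_j + Σ_{ℓ=1}^m B_{iℓ} S_{ℓj}| ≤ M_{ij}. Then, with W := diag(v)⁻¹ and K := S · diag(v)⁻¹, the closed-loop matrix satisfies ‖W (A + B K) W⁻¹‖_∞ < 1; i.e., A + BK is W-superstable with the diagonal weight W = diag(v)⁻¹. -/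

import Mathlib

/-!
Conjugation by `diagonal v` multiplies the entry `(i, j)` of `A + B K` by `v j / v i`, and
`K = S (diagonal v)⁻¹` makes `(A + B K) i j * v j = A i j * v j + (B S) i j`. Hence the `i`-th
absolute row sum of the conjugate is at most `(∑ j, M i j) / v i < 1`.
-/

/-- The operator norm of a square real matrix induced by the vector sup-norm:
`‖C‖_∞ = max_i ∑_j |C i j|`. -/
noncomputable def matInfNorm {n : ℕ} (C : Matrix (Fin n) (Fin n) ℝ) : ℝ :=
  ⨆ i, ∑ j, |C i j|

open Matrix

theorem matInfNorm_lt_of_forall_sum_abs_lt {n : ℕ} {C : Matrix (Fin n) (Fin n) ℝ} {c : ℝ}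
    (hc : 0 < c) (h : ∀ i, ∑ j, |C i j| < c) : matInfNorm C < c := by
  rcases isEmpty_or_nonempty (Fin n) with _ | _
  · simpa [matInfNorm, Real.iSup_of_isEmpty] using hc
  · obtain ⟨i, hi⟩ := exists_eq_ciSup_of_finite (f := fun i => ∑ j, |C i j|)
    exact (hi ▸ h i : _)

theorem Matrix.inv_diagonal_of_forall_ne_zero {ι : Type*} [Fintype ι] [DecidableEq ι]
    {K : Type*} [Field K] {v : ι → K} (hv : ∀ i, v i ≠ 0) :
    (diagonal v)⁻¹ = diagonal v⁻¹ := by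
  refine inv_eq_right_inv ?_
  rw [diagonal_mul_diagonal, ← diagonal_one]
  exact congrArg diagonal (funext fun i => mul_inv_cancel₀ (hv i))

theorem matInfNorm_diagonal_inv_mul_mul_diagonal_lt_one {n : ℕ}
    {C : Matrix (Fin n) (Fin n) ℝ} {v : Fin n → ℝ} (hv : ∀ i, 0 < v i)
    (h : ∀ i, ∑ j, |C i j| * v j < v i) :
    matInfNorm ((diagonal v)⁻¹ * C * diagonal v) < 1 := by
  rw [inv_diagonal_of_forall_ne_zero fun i => (hv i).ne']
  refine matInfNorm_lt_of_forall_sum_abs_lt one_pos fun i => ?_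
  calc ∑ j, |((diagonal v⁻¹) * C * diagonal v) i j|
      = (v i)⁻¹ * ∑ j, |C i j| * v j := by
        simp only [mul_diagonal, diagonal_mul, Pi.inv_apply, abs_mul, Finset.mul_sum,
          abs_inv, abs_of_pos (hv _), mul_assoc]
    _ < (v i)⁻¹ * v i := mul_lt_mul_of_pos_left (h i) (inv_pos.mpr (hv i))
    _ = 1 := inv_mul_cancel₀ (hv i).ne'

theorem stmt13 (n m : ℕ)
    (A : Matrix (Fin n) (Fin n) ℝ) (B : Matrix (Fin n) (Fin m) ℝ)
    (v : Fin n → ℝ) (hv : ∀ i, 0 < v i)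
    (M : Matrix (Fin n) (Fin n) ℝ) (S : Matrix (Fin m) (Fin n) ℝ)
    (hrow : ∀ i, ∑ j, M i j < v i)
    (helem : ∀ i j, |A i j * v j + ∑ ℓ, B i ℓ * S ℓ j| ≤ M i j) :
    -- with W = diag(v)⁻¹ and K = S · diag(v)⁻¹, ‖W (A + B K) W⁻¹‖_∞ < 1
    matInfNorm ((Matrix.diagonal v)⁻¹ *
      (A + B * (S * (Matrix.diagonal v)⁻¹)) * Matrix.diagonal v) < 1 := by
  refine matInfNorm_diagonal_inv_mul_mul_diagonal_lt_one hv fun i => ?_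
  rw [inv_diagonal_of_forall_ne_zero fun i => (hv i).ne', ← Matrix.mul_assoc]
  have hentry : ∀ j, (A + B * S * diagonal v⁻¹) i j * v j
      = A i j * v j + ∑ ℓ, B i ℓ * S ℓ j := fun j => by
    rw [Matrix.add_apply, mul_diagonal, add_mul, Pi.inv_apply, mul_assoc,
      inv_mul_cancel₀ (hv j).ne', mul_one, mul_apply]
  calc ∑ j, |(A + B * S * diagonal v⁻¹) i j| * v j
      = ∑ j, |A i j * v j + ∑ ℓ, B i ℓ * S ℓ j| := by
        simp only [← hentry, abs_mul, abs_of_pos (hv _)]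
    _ ≤ ∑ j, M i j := Finset.sum_le_sum fun j _ => helem i j
    _ < v i := hrow i
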